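/- For positive integers ℓ, m, the congruence subgroups of the braid group satisfy B_n[ℓ] · B_n[m] = B_n[gcd(ℓ, m)]. -/

import Mathlib

open Matrix FreeGroup

/-- The braid relations on `n` strands, with Artin generators indexed by `Fin (n-1)`. -/
def braidRels (n : ℕ) : Set (FreeGroup (Fin (n - 1))) :=
  {r | (∃ i j : Fin (n - 1), (i : ℕ) + 1 = (j : ℕ) ∧
          r = of i * of j * of i * (of j * of i * of j)⁻¹) ∨
       (∃ i j : Fin (n - 1), (i : ℕ) + 2 ≤ (j : ℕ) ∧
          r = of i * of j * (of j * of i)⁻¹)}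

/-- The braid group on `n` strands, as a presented group. -/
def BraidGroup (n : ℕ) : Type := PresentedGroup (braidRels n)

instance (n : ℕ) : Group (BraidGroup n) := by unfold BraidGroup; infer_instance

/-- The Artin generator `σ_{i+1}` of the braid group on `n` strands. -/
def σ {n : ℕ} (i : Fin (n - 1)) : BraidGroup n := PresentedGroup.of i

/-- The integral Burau matrix of the Artin generator `σ_{i+1}` (rows and columns `i`, `i+1`
in 0-indexed notation): the identity matrix with the block `[[2, -1], [1, 0]]` inserted. -/
def burauMat (n : ℕ) (i : ℕ) : Matrix (Fin n) (Fin n) ℤ :=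
  Matrix.of fun j k =>
    if (j : ℕ) = i ∧ (k : ℕ) = i then 2
    else if (j : ℕ) = i ∧ (k : ℕ) = i + 1 then -1
    else if (j : ℕ) = i + 1 ∧ (k : ℕ) = i then 1
    else if (j : ℕ) = i + 1 ∧ (k : ℕ) = i + 1 then 0
    else if j = k then 1 else 0

/-- `IsBurau ρ` asserts that `ρ` is the integral Burau representation (Burau at `t = -1`). -/
def IsBurau {n : ℕ} (ρ : BraidGroup n →* Matrix.GeneralLinearGroup (Fin n) ℤ) : Prop :=
  ∀ i : Fin (n - 1), (ρ (σ i) : Matrix (Fin n) (Fin n) ℤ) = burauMat n (i : ℕ)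

/-- Reduction modulo `ℓ` on `GL(n, ℤ)`. -/
def glMod (n ℓ : ℕ) :
    Matrix.GeneralLinearGroup (Fin n) ℤ →* Matrix.GeneralLinearGroup (Fin n) (ZMod ℓ) :=
  Units.map ((Int.castRingHom (ZMod ℓ)).mapMatrix.toMonoidHom)

/-- The level-`ℓ` congruence subgroup `B_n[ℓ]` of the braid group: the kernel of the
integral Burau representation reduced mod `ℓ`. -/
def braidCong {n : ℕ} (ρ : BraidGroup n →* Matrix.GeneralLinearGroup (Fin n) ℤ) (ℓ : ℕ) :
    Subgroup (BraidGroup n) :=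
  ((glMod n ℓ).comp ρ).ker

instance braidCong_normal {n : ℕ} (ρ : BraidGroup n →* Matrix.GeneralLinearGroup (Fin n) ℤ)
    (ℓ : ℕ) : (braidCong ρ ℓ).Normal :=
  MonoidHom.normal_ker _

/-!
The Burau matrix of `σᵢ` is `1 + N` with `N * N = 0`, so `ρ (σᵢ ^ k) = 1 + k • N ≡ 1 [mod k]`.
Hence, by Bézout, `B[a] ⊔ B[b]` is the whole braid group for coprime `a, b`, while
`B[a] ⊓ B[b] = B[a * b]` by the Chinese remainder theorem. Split `lcm ℓ m = c' * c` with
`c' ∣ ℓ` and `c ∣ m` coprime; then `ℓ = c' * e` and `m = c * f` with `e ∣ c`, `f ∣ c'` and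
`e, f ∣ gcd ℓ m`. Two applications of the modular law for normal subgroups give
`B[e] ≤ B[c] ⊔ B[ℓ]` and then `B[gcd ℓ m] ≤ B[ℓ] ⊔ B[m]`; finally `B[ℓ] * B[m] = B[ℓ] ⊔ B[m]`
as sets because the subgroups are normal.
-/

theorem one_add_pow_of_mul_self_eq_zero {R : Type*} [Ring R] {x : R} (hx : x * x = 0) (k : ℕ) :
    (1 + x) ^ k = 1 + k • x := by
  induction k with
  | zero => simp
  | succ k ih =>
    rw [pow_succ, ih, add_mul, one_mul, smul_mul_assoc, mul_add, mul_one, hx, add_zero,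
      succ_nsmul]
    abel

theorem Nat.eq_mul_gcd_of_coprime {a b x : ℕ} (hab : a.Coprime b) (ha : a ∣ x) (hx : x ∣ a * b) :
    x = a * x.gcd b := by
  conv_lhs => rw [← Nat.gcd_eq_left hx, hab.gcd_mul, Nat.gcd_eq_right ha]

namespace Subgroup

variable {G : Type*} [Group G]

/-- Dedekind's modular law. -/
theorem sup_inf_le_sup_inf_of_le {A C : Subgroup G} (B : Subgroup G) [B.Normal] (h : A ≤ C) :
    (A ⊔ B) ⊓ C ≤ A ⊔ B ⊓ C := by
  intro x hx
  obtain ⟨hxAB, hxC⟩ := mem_inf.1 hx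
  rw [← SetLike.mem_coe, mul_normal] at hxAB
  obtain ⟨a, ha, b, hb, rfl⟩ := hxAB
  exact mul_mem_sup ha ⟨hb, (C.mul_mem_cancel_left (h ha)).1 hxC⟩

theorem mem_sup_of_pow_mem_of_coprime {H K : Subgroup G} {g : G} {a b : ℕ} (hab : a.Coprime b)
    (ha : g ^ a ∈ H) (hb : g ^ b ∈ K) : g ∈ H ⊔ K := by
  have hg : g = (g ^ a) ^ a.gcdA b * (g ^ b) ^ a.gcdB b := by
    rw [← zpow_natCast, ← zpow_natCast g b, ← _root_.zpow_mul, ← _root_.zpow_mul,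
      ← _root_.zpow_add, ← Nat.gcd_eq_gcd_ab, hab.gcd_eq_one, Nat.cast_one, zpow_one]
  rw [hg]
  exact mul_mem_sup (zpow_mem ha _) (zpow_mem hb _)

theorem sup_eq_apply_gcd {N : ℕ → Subgroup G} [∀ k, (N k).Normal]
    (anti : ∀ {a b : ℕ}, a ∣ b → N b ≤ N a)
    (inf_le_mul : ∀ {a b : ℕ}, a.Coprime b → N a ⊓ N b ≤ N (a * b))
    (sup_eq_top : ∀ {a b : ℕ}, a.Coprime b → N a ⊔ N b = ⊤) (ℓ m : ℕ) :
    N ℓ ⊔ N m = N (ℓ.gcd m) := by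
  refine le_antisymm (sup_le (anti (ℓ.gcd_dvd_left m)) (anti (ℓ.gcd_dvd_right m))) ?_
  rcases eq_or_ne ℓ 0 with rfl | hℓ
  · rw [Nat.gcd_zero_left]; exact le_sup_right
  rcases eq_or_ne m 0 with rfl | hm
  · rw [Nat.gcd_zero_right]; exact le_sup_left
  set c' := Nat.factorizationLCMLeft ℓ m
  set c := Nat.factorizationLCMRight ℓ m
  have hcc' : c'.Coprime c := Nat.coprime_factorizationLCMLeft_factorizationLCMRight ℓ m
  have hlcm : c' * c = ℓ.lcm m := Nat.factorizationLCMLeft_mul_factorizationLCMRight hℓ hm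
  have hc'ℓ : c' ∣ ℓ := Nat.factorizationLCMLeft_dvd_left ℓ m
  have hcm : c ∣ m := Nat.factorizationLCMRight_dvd_right ℓ m
  have hℓ_eq : ℓ = c' * ℓ.gcd c :=
    Nat.eq_mul_gcd_of_coprime hcc' hc'ℓ (hlcm ▸ Nat.dvd_lcm_left ℓ m)
  have hm_eq : m = c * m.gcd c' :=
    Nat.eq_mul_gcd_of_coprime hcc'.symm hcm (mul_comm c' c ▸ hlcm ▸ Nat.dvd_lcm_right ℓ m)
  have he : ℓ.gcd c ∣ ℓ.gcd m := Nat.gcd_dvd_gcd_of_dvd_right ℓ hcm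
  have hf : m.gcd c' ∣ ℓ.gcd m := by
    rw [Nat.gcd_comm ℓ]; exact Nat.gcd_dvd_gcd_of_dvd_right m hc'ℓ
  have hNe : N (ℓ.gcd c) ≤ N c ⊔ N ℓ := calc
    N (ℓ.gcd c) = (N c ⊔ N c') ⊓ N (ℓ.gcd c) := by rw [sup_eq_top hcc'.symm, top_inf_eq]
    _ ≤ N c ⊔ N c' ⊓ N (ℓ.gcd c) := sup_inf_le_sup_inf_of_le _ (anti (ℓ.gcd_dvd_right c))
    _ ≤ N c ⊔ N ℓ := sup_le_sup_left ((inf_le_mul (hcc'.coprime_dvd_right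
        (ℓ.gcd_dvd_right c))).trans_eq (congrArg N hℓ_eq.symm)) _
  have hNcd : N c ⊓ N (ℓ.gcd m) ≤ N m := calc
    N c ⊓ N (ℓ.gcd m) ≤ N c ⊓ N (m.gcd c') := inf_le_inf_left _ (anti hf)
    _ ≤ N m := (inf_le_mul (hcc'.symm.coprime_dvd_right (m.gcd_dvd_right c'))).trans_eq
        (congrArg N hm_eq.symm)
  calc N (ℓ.gcd m) = (N ℓ ⊔ N c) ⊓ N (ℓ.gcd m) := by
        rw [sup_comm, inf_eq_right.2 ((anti he).trans hNe)]
    _ ≤ N ℓ ⊔ N c ⊓ N (ℓ.gcd m) := sup_inf_le_sup_inf_of_le _ (anti (ℓ.gcd_dvd_left m))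
    _ ≤ N ℓ ⊔ N m := sup_le_sup_left hNcd _

end Subgroup

section Burau

variable {n : ℕ}

theorem burauMat_eq_one_add_vecMulVec {i : ℕ} (hi : i + 1 < n) :
    burauMat n i = 1 + vecMulVec (Pi.single ⟨i, by omega⟩ 1 + Pi.single ⟨i + 1, hi⟩ 1)
      (Pi.single ⟨i, by omega⟩ 1 - Pi.single ⟨i + 1, hi⟩ 1) := by
  ext j k
  simp only [burauMat, of_apply, Matrix.add_apply, one_apply, vecMulVec_apply, Pi.add_apply,
    Pi.sub_apply, Pi.single_apply, Fin.ext_iff]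
  by_cases h1 : (j : ℕ) = i <;> by_cases h2 : (k : ℕ) = i <;>
    by_cases h3 : (j : ℕ) = i + 1 <;> by_cases h4 : (k : ℕ) = i + 1 <;>
    simp [h1, h2, h3, h4]

theorem burauMat_sub_one_mul_self {i : ℕ} (hi : i + 1 < n) :
    (burauMat n i - 1) * (burauMat n i - 1) = 0 := by
  rw [burauMat_eq_one_add_vecMulVec hi, add_sub_cancel_left, vecMulVec_mul_vecMulVec]
  simp [Fin.ext_iff]

theorem closure_range_σ : Subgroup.closure (Set.range (σ : Fin (n - 1) → BraidGroup n)) = ⊤ :=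
  PresentedGroup.closure_range_of (braidRels n)

variable (ρ : BraidGroup n →* Matrix.GeneralLinearGroup (Fin n) ℤ)

theorem mem_braidCong_iff {k : ℕ} {x : BraidGroup n} :
    x ∈ braidCong ρ k ↔ ∀ i j, (ρ x : Matrix (Fin n) (Fin n) ℤ) i j ≡
      (1 : Matrix (Fin n) (Fin n) ℤ) i j [ZMOD k] := by
  rw [braidCong, MonoidHom.mem_ker, MonoidHom.comp_apply, Units.ext_iff, ← Matrix.ext_iff]
  simp [glMod, one_apply, ← ZMod.intCast_eq_intCast_iff, apply_ite (Int.cast : ℤ → ZMod k)]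

theorem braidCong_le_of_dvd {a b : ℕ} (hab : a ∣ b) : braidCong ρ b ≤ braidCong ρ a := by
  intro x hx
  rw [mem_braidCong_iff] at hx ⊢
  exact fun i j => (hx i j).of_dvd (Int.natCast_dvd_natCast.2 hab)

theorem braidCong_inf_le_mul {a b : ℕ} (hab : a.Coprime b) :
    braidCong ρ a ⊓ braidCong ρ b ≤ braidCong ρ (a * b) := by
  intro x hx
  obtain ⟨ha, hb⟩ := Subgroup.mem_inf.1 hx
  rw [mem_braidCong_iff] at ha hb ⊢
  intro i j
  rw [Nat.cast_mul, ← Int.modEq_and_modEq_iff_modEq_mul (by simpa using hab)]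
  exact ⟨ha i j, hb i j⟩

theorem σ_pow_mem_braidCong (hρ : IsBurau ρ) (i : Fin (n - 1)) (k : ℕ) :
    σ i ^ k ∈ braidCong ρ k := by
  have hi : (i : ℕ) + 1 < n := by omega
  have hpow : (ρ (σ i ^ k) : Matrix (Fin n) (Fin n) ℤ) = 1 + k • (burauMat n i - 1) := by
    rw [map_pow, Units.val_pow_eq_pow_val, hρ i, ← one_add_pow_of_mul_self_eq_zero
      (burauMat_sub_one_mul_self hi), add_sub_cancel]
  rw [mem_braidCong_iff, hpow]
  intro j l
  rw [Matrix.add_apply, Matrix.smul_apply, nsmul_eq_mul]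
  exact Int.modEq_add_fac_self

theorem braidCong_sup_eq_top (hρ : IsBurau ρ) {a b : ℕ} (hab : a.Coprime b) :
    braidCong ρ a ⊔ braidCong ρ b = ⊤ := by
  rw [eq_top_iff, ← closure_range_σ, Subgroup.closure_le]
  rintro _ ⟨i, rfl⟩
  exact Subgroup.mem_sup_of_pow_mem_of_coprime hab (σ_pow_mem_braidCong ρ hρ i a)
    (σ_pow_mem_braidCong ρ hρ i b)

end Burau

open Pointwise in
theorem braidCong_mul_general {n : ℕ} (ρ : BraidGroup n →* Matrix.GeneralLinearGroup (Fin n) ℤ)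
    (hρ : IsBurau ρ) (ℓ m : ℕ) :
    (braidCong ρ ℓ : Set (BraidGroup n)) * (braidCong ρ m : Set (BraidGroup n)) =
      (braidCong ρ (Nat.gcd ℓ m) : Set (BraidGroup n)) := by
  rw [← Subgroup.mul_normal, Subgroup.sup_eq_apply_gcd (braidCong_le_of_dvd ρ)
    (braidCong_inf_le_mul ρ) (braidCong_sup_eq_top ρ hρ)]

open Pointwise in
theorem braidCong_mul {n : ℕ} (ρ : BraidGroup n →* Matrix.GeneralLinearGroup (Fin n) ℤ)
    (hρ : IsBurau ρ) (ℓ m : ℕ) (hℓ : 0 < ℓ) (hm : 0 < m) :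
    (braidCong ρ ℓ : Set (BraidGroup n)) * (braidCong ρ m : Set (BraidGroup n)) =
      (braidCong ρ (Nat.gcd ℓ m) : Set (BraidGroup n)) :=
  braidCong_mul_general ρ hρ ℓ m
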